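/- (Powers–Reznick degree bound for certificates of positivity.) Let p be a polynomial in n variables of degree l ≥ 2 with Bernstein coefficients b_α(p,l,Δ) of degree l and b_α(p,k,Δ) of degree k on the standard simplex Δ. Suppose p(x) > 0 for all x ∈ Δ, and let p̲ = min_{x∈Δ} p(x). If k > ( l(l−1)/2 ) · ( max_{|α|=l} |b_α(p,l,Δ)| ) / p̲, then b_α(p,k,Δ) > 0 for all |α| = k. -/

import Mathlib

open Finset

noncomputable section

/-- The standard simplex Δ in ℝⁿ. -/
def stdSimp (n : ℕ) : Set (Fin n → ℝ) :=
  {x | (∀ i, 0 ≤ x i) ∧ ∑ i, x i ≤ 1}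

/-- Multi-indices α ∈ ℕ^{n+1} with |α| = k. -/
def multIdx (n k : ℕ) : Finset (Fin (n+1) → ℕ) :=
  Finset.Nat.antidiagonalTuple (n+1) k

lemma multIdx_nonempty (n k : ℕ) : (multIdx n k).Nonempty :=
  ⟨fun i => if i = 0 then k else 0, by
    simp [multIdx, Finset.Nat.mem_antidiagonalTuple]⟩

/-- Bernstein basis polynomial of degree k on the standard simplex. -/
def bern (n k : ℕ) (α : Fin (n+1) → ℕ) (x : Fin n → ℝ) : ℝ :=
  ((k.factorial : ℝ) / ∏ i, ((α i).factorial : ℝ)) *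
    (∏ i : Fin n, x i ^ α i.succ) * (1 - ∑ i, x i) ^ α 0

/-- i-th standard unit multi-index. -/
def unitIdx (n : ℕ) (i : Fin (n+1)) : Fin (n+1) → ℕ :=
  fun j => if j = i then 1 else 0

/-- vertex multi-index k·eᵢ -/
def vertIdx (n k : ℕ) (i : Fin (n+1)) : Fin (n+1) → ℕ :=
  fun j => if j = i then k else 0

/-- second difference -/
def secondDiff (n : ℕ) (b : (Fin (n+1) → ℕ) → ℝ) (γ : Fin (n+1) → ℕ)
    (i j : Fin (n+1)) : ℝ :=
  b (γ + unitIdx n i + unitIdx n (j - 1)) + b (γ + unitIdx n (i - 1) + unitIdx n j)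
    - b (γ + unitIdx n (i - 1) + unitIdx n (j - 1)) - b (γ + unitIdx n i + unitIdx n j)

/-
Degree elevation writes the degree-`k` Bernstein coefficients as hypergeometric averages
`b_β(p,k) = ∑_α b_α(p,l) ∏ᵢ C(βᵢ, αᵢ) / C(k, l)` of the degree-`l` ones. Multiplying by
`r = k(k-1)⋯(k-l+1) / kˡ` turns the hypergeometric weights into weights that are dominated by the
multinomial weights `B_α^{(l)}(β/k)` and, by Vandermonde's identity, sum to `r`. Comparing with
`p(β/k) = ∑_α b_α(p,l) B_α^{(l)}(β/k) ≥ p̲` gives `r · b_β(p,k) ≥ p̲ - max_α |b_α(p,l)| · (1 - r)`,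
and `1 - r ≤ ∑_{j<l} j/k = l(l-1)/(2k)`.
-/

lemma IsCompact.sInf_image_pos {X : Type*} [TopologicalSpace X] {K : Set X} {f : X → ℝ}
    (hK : IsCompact K) (hne : K.Nonempty) (hf : ContinuousOn f K) (hpos : ∀ x ∈ K, 0 < f x) :
    0 < sInf (f '' K) := by
  obtain ⟨x, hx, hfx⟩ := (hK.image_of_continuousOn hf).sInf_mem (hne.image f)
  exact hfx ▸ hpos x hx

lemma sum_mul_le_mul_sum_of_abs_le {ι : Type*} (s : Finset ι) {b c : ι → ℝ} {L : ℝ}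
    (hc : ∀ i ∈ s, 0 ≤ c i) (hb : ∀ i ∈ s, |b i| ≤ L) :
    ∑ i ∈ s, b i * c i ≤ L * ∑ i ∈ s, c i := by
  rw [Finset.mul_sum]
  exact Finset.sum_le_sum fun i hi =>
    mul_le_mul_of_nonneg_right ((le_abs_self _).trans (hb i hi)) (hc i hi)

lemma one_sub_sum_le_prod_one_sub {ι R : Type*} [CommRing R] [LinearOrder R] [IsStrictOrderedRing R]
    [DecidableEq ι] (s : Finset ι) {f : ι → R} (h0 : ∀ i ∈ s, 0 ≤ f i) (h1 : ∀ i ∈ s, f i ≤ 1) :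
    1 - ∑ i ∈ s, f i ≤ ∏ i ∈ s, (1 - f i) := by
  induction s using Finset.induction_on with
  | empty => simp
  | insert a s ha ih =>
    rw [Finset.sum_insert ha, Finset.prod_insert ha]
    have hs := Finset.sum_nonneg fun i hi => h0 i (Finset.mem_insert_of_mem hi)
    have ih' := ih (fun i hi => h0 i (Finset.mem_insert_of_mem hi))
      (fun i hi => h1 i (Finset.mem_insert_of_mem hi))
    have ha0 := h0 a (Finset.mem_insert_self a s)
    have ha1 := h1 a (Finset.mem_insert_self a s)
    nlinarith [mul_le_mul_of_nonneg_left ih' (sub_nonneg.2 ha1)]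

lemma sum_range_natCast (l : ℕ) : ∑ j ∈ Finset.range l, (j : ℝ) = l * (l - 1) / 2 := by
  induction l with
  | zero => simp
  | succ l ih =>
    rw [Finset.sum_range_succ, ih]
    push_cast
    ring

lemma one_sub_le_descFactorial_div_pow {l k : ℕ} (hlk : l ≤ k) :
    1 - l * (l - 1) / (2 * k) ≤ (k.descFactorial l : ℝ) / k ^ l := by
  have hprod : (k.descFactorial l : ℝ) / k ^ l = ∏ j ∈ Finset.range l, (1 - (j : ℝ) / k) := by
    rw [← descPochhammer_eval_eq_descFactorial, descPochhammer_eval_eq_prod_range,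
      ← Finset.card_range l, ← Finset.prod_const, Finset.card_range, ← Finset.prod_div_distrib]
    refine Finset.prod_congr rfl fun j hj => ?_
    have hk : (k : ℝ) ≠ 0 := by
      have := Finset.mem_range.1 hj
      exact_mod_cast (show k ≠ 0 by omega)
    field_simp
  rw [hprod, show (l : ℝ) * (l - 1) / (2 * k) = ∑ j ∈ Finset.range l, (j : ℝ) / k by
    rw [← Finset.sum_div, sum_range_natCast, div_div]]
  refine one_sub_sum_le_prod_one_sub _ (fun j _ => by positivity) fun j hj => ?_
  exact div_le_one_of_le₀ (by exact_mod_cast (Finset.mem_range.1 hj).le.trans hlk) (by positivity)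

lemma pos_and_le_of_mul_pred_div_two_mul_lt {l k : ℕ} {L m : ℝ} (hm : 0 < m) (hmL : m ≤ L)
    (h : l * (l - 1) / 2 * L < k * m) : 0 < k ∧ l ≤ k := by
  have hl : (0 : ℝ) ≤ l * (l - 1) / 2 := by
    rw [← Nat.cast_choose_two]
    positivity
  have hlk : (l : ℝ) * (l - 1) / 2 < k := by nlinarith
  have hk : 0 < k := by exact_mod_cast hl.trans_lt hlk
  refine ⟨hk, ?_⟩
  by_contra! hkl
  have hk1 : (1 : ℝ) ≤ k := by exact_mod_cast hk
  have hkl' : (k : ℝ) + 1 ≤ l := by exact_mod_cast hkl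
  nlinarith

namespace Bernstein

open MvPolynomial
open scoped Nat

variable {n : ℕ}

lemma mem_multIdx {k : ℕ} {α : Fin (n+1) → ℕ} : α ∈ multIdx n k ↔ ∑ i, α i = k := by
  simp [multIdx, Finset.Nat.mem_antidiagonalTuple]

def baryCoord (x : Fin n → ℝ) : Fin (n+1) → ℝ := Fin.cons (1 - ∑ i, x i) x

lemma sum_baryCoord (x : Fin n → ℝ) : ∑ i, baryCoord x i = 1 := by
  simp [Fin.sum_univ_succ, baryCoord]

lemma baryCoord_tail {y : Fin (n+1) → ℝ} (hy : ∑ i, y i = 1) : baryCoord (Fin.tail y) = y := by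
  rw [Fin.sum_univ_succ] at hy
  refine Fin.cases ?_ (fun i => rfl) |> funext
  simp only [baryCoord, Fin.cons_zero, Fin.tail]
  linarith

lemma baryCoord_mem_stdSimplex {x : Fin n → ℝ} (hx : x ∈ stdSimp n) :
    baryCoord x ∈ stdSimplex ℝ (Fin (n+1)) :=
  ⟨Fin.cases (by simpa [baryCoord] using hx.2) hx.1, sum_baryCoord x⟩

lemma tail_mem_stdSimp {y : Fin (n+1) → ℝ} (hy : y ∈ stdSimplex ℝ (Fin (n+1))) :
    Fin.tail y ∈ stdSimp n := by
  refine ⟨fun i => hy.1 i.succ, ?_⟩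
  have := hy.2
  rw [Fin.sum_univ_succ] at this
  simp only [Fin.tail]
  linarith [hy.1 0]

lemma stdSimp_eq_image_tail : stdSimp n = Fin.tail '' stdSimplex ℝ (Fin (n+1)) :=
  Set.Subset.antisymm
    (fun x hx => ⟨baryCoord x, baryCoord_mem_stdSimplex hx, rfl⟩)
    (Set.image_subset_iff.2 fun _ hy => tail_mem_stdSimp hy)

lemma isCompact_stdSimp : IsCompact (stdSimp n) := by
  rw [stdSimp_eq_image_tail]
  exact (isCompact_stdSimplex _ _).image (by fun_prop)

def homBern (k : ℕ) (α : Fin (n+1) → ℕ) (y : Fin (n+1) → ℝ) : ℝ :=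
  ((k ! : ℝ) / ∏ i, ((α i)! : ℝ)) * ∏ i, y i ^ α i

lemma bern_eq_homBern (k : ℕ) (α : Fin (n+1) → ℕ) (x : Fin n → ℝ) :
    bern n k α x = homBern k α (baryCoord x) := by
  rw [bern, homBern, Fin.prod_univ_succ (fun i => baryCoord x i ^ α i)]
  simp only [baryCoord, Fin.cons_zero, Fin.cons_succ]
  ring

lemma sum_homBern (k : ℕ) (y : Fin (n+1) → ℝ) :
    ∑ α ∈ multIdx n k, homBern k α y = (∑ i, y i) ^ k := by
  rw [Finset.sum_pow_eq_sum_piAntidiag, multIdx, ← Finset.piAntidiag_univ_fin_eq_antidiagonalTuple]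
  refine Finset.sum_congr rfl fun α hα => ?_
  rw [homBern, ← (Finset.mem_piAntidiag.1 hα).1, Nat.multinomial, Nat.cast_div
    (Nat.prod_factorial_dvd_factorial_sum _ _) (by positivity), Nat.cast_prod]

lemma sum_bern (k : ℕ) (x : Fin n → ℝ) : ∑ α ∈ multIdx n k, bern n k α x = 1 := by
  simp only [bern_eq_homBern, sum_homBern, sum_baryCoord, one_pow]

lemma bern_nonneg {l : ℕ} (α : Fin (n+1) → ℕ) {x : Fin n → ℝ} (hx : x ∈ stdSimp n) :
    0 ≤ bern n l α x := by
  rw [bern_eq_homBern, homBern]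
  exact mul_nonneg (by positivity)
    (Finset.prod_nonneg fun i _ => pow_nonneg ((baryCoord_mem_stdSimplex hx).1 i) _)

lemma sum_mul_bern_le {l : ℕ} {b : (Fin (n+1) → ℕ) → ℝ} {L : ℝ}
    (hb : ∀ α ∈ multIdx n l, |b α| ≤ L) {x : Fin n → ℝ} (hx : x ∈ stdSimp n) :
    ∑ α ∈ multIdx n l, b α * bern n l α x ≤ L := by
  simpa only [sum_bern, mul_one] using
    sum_mul_le_mul_sum_of_abs_le _ (fun α _ => bern_nonneg (l := l) α hx) hb

lemma homBern_smul {k : ℕ} {α : Fin (n+1) → ℕ} (hα : α ∈ multIdx n k) (c : ℝ)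
    (y : Fin (n+1) → ℝ) : homBern k α (c • y) = c ^ k * homBern k α y := by
  simp only [homBern, Pi.smul_apply, smul_eq_mul, mul_pow, Finset.prod_mul_distrib,
    Finset.prod_pow_eq_pow_sum, mem_multIdx.1 hα]
  ring

lemma homBern_mul_homBern (l m : ℕ) (α γ : Fin (n+1) → ℕ) (y : Fin (n+1) → ℝ) :
    homBern l α y * homBern m γ y
      = (∏ i, (((α + γ) i).choose (α i) : ℝ)) / (l + m).choose l * homBern (l + m) (α + γ) y := by
  simp only [homBern, Pi.add_apply, Nat.cast_add_choose, Finset.prod_div_distrib,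
    Finset.prod_mul_distrib, pow_add]
  field_simp

lemma homBern_eq_sum_homBern {l k : ℕ} (hlk : l ≤ k) {α : Fin (n+1) → ℕ} (hα : α ∈ multIdx n l)
    {y : Fin (n+1) → ℝ} (hy : ∑ i, y i = 1) :
    homBern l α y = ∑ β ∈ multIdx n k,
      (∏ i, ((β i).choose (α i) : ℝ)) / k.choose l * homBern k β y := by
  obtain ⟨m, rfl⟩ := Nat.exists_eq_add_of_le hlk
  have hsupp : ∀ β ∈ multIdx n (l + m), β ∉ (multIdx n m).map (addLeftEmbedding α) →
      (∏ i, ((β i).choose (α i) : ℝ)) / (l + m).choose l * homBern (l + m) β y = 0 := by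
    intro β hβ hβα
    obtain ⟨i, hi⟩ : ∃ i, β i < α i := by
      by_contra! hle
      refine hβα (Finset.mem_map.2 ⟨β - α, mem_multIdx.2 ?_, funext fun i => ?_⟩)
      · change ∑ i, (β i - α i) = m
        rw [Finset.sum_tsub_distrib _ fun i _ => hle i, mem_multIdx.1 hα, mem_multIdx.1 hβ]
        omega
      · simp [Nat.add_sub_cancel' (hle i)]
    rw [Finset.prod_eq_zero (Finset.mem_univ i) (by simp [Nat.choose_eq_zero_of_lt hi])]
    simp
  calc homBern l α y = homBern l α y * (∑ i, y i) ^ m := by rw [hy, one_pow, mul_one]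
    _ = ∑ γ ∈ multIdx n m, homBern l α y * homBern m γ y := by
      rw [← sum_homBern, Finset.mul_sum]
    _ = _ := by
      simp only [homBern_mul_homBern]
      refine (Finset.sum_map _ (addLeftEmbedding α) _).symm.trans
        (Finset.sum_subset (fun β hβ => ?_) hsupp)
      obtain ⟨γ, hγ, rfl⟩ := Finset.mem_map.1 hβ
      simp [mem_multIdx, Finset.sum_add_distrib, mem_multIdx.1 hα, mem_multIdx.1 hγ]

def elevate (l k : ℕ) (b : (Fin (n+1) → ℕ) → ℝ) (β : Fin (n+1) → ℕ) : ℝ :=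
  (∑ α ∈ multIdx n l, b α * ∏ i, ((β i).choose (α i) : ℝ)) / k.choose l

lemma sum_mul_bern_eq_sum_elevate_mul_bern {l k : ℕ} (hlk : l ≤ k)
    (b : (Fin (n+1) → ℕ) → ℝ) (x : Fin n → ℝ) :
    ∑ α ∈ multIdx n l, b α * bern n l α x = ∑ β ∈ multIdx n k, elevate l k b β * bern n k β x := by
  simp only [bern_eq_homBern, elevate, Finset.sum_div, Finset.sum_mul]
  rw [Finset.sum_comm]
  refine Finset.sum_congr rfl fun α hα => ?_
  rw [homBern_eq_sum_homBern hlk hα (sum_baryCoord x), Finset.mul_sum]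
  exact Finset.sum_congr rfl fun β _ => by ring

lemma eval_monomial_equivFunOnFinite (β : Fin (n+1) → ℕ) (c : ℝ) (y : Fin (n+1) → ℝ) :
    eval y (monomial (Finsupp.equivFunOnFinite.symm β) c) = c * ∏ i, y i ^ β i := by
  rw [eval_monomial, Finsupp.prod_fintype _ _ fun _ => pow_zero _]
  rfl

lemma eq_of_sum_mul_bern_eq {k : ℕ} {d e : (Fin (n+1) → ℕ) → ℝ}
    (h : ∀ x, ∑ β ∈ multIdx n k, d β * bern n k β x = ∑ β ∈ multIdx n k, e β * bern n k β x) :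
    ∀ β ∈ multIdx n k, d β = e β := by
  set P : MvPolynomial (Fin (n+1)) ℝ := ∑ β ∈ multIdx n k,
    monomial (Finsupp.equivFunOnFinite.symm β) ((d β - e β) * (k ! / ∏ i, ((β i)! : ℝ)))
  have hP : ∀ y, eval y P = ∑ β ∈ multIdx n k, (d β - e β) * homBern k β y := by
    intro y
    simp only [P, map_sum, eval_monomial_equivFunOnFinite, homBern, mul_assoc]
  have hvanish : ∀ y, ∑ i, y i = 1 → ∑ β ∈ multIdx n k, (d β - e β) * homBern k β y = 0 := by
    intro y hy
    have := h (Fin.tail y)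
    simp only [bern_eq_homBern, baryCoord_tail hy] at this
    simp only [sub_mul, Finset.sum_sub_distrib, this, sub_self]
  -- By homogeneity `P` vanishes off the hyperplane `∑ yᵢ = 0`, so `P * ∑ Xᵢ` vanishes everywhere.
  have hP_mul : P * ∑ i, X i = 0 := by
    refine MvPolynomial.funext fun y => ?_
    rw [map_mul, map_zero, hP, show eval y (∑ i, X i) = ∑ i, y i by simp]
    rcases eq_or_ne (∑ i, y i) 0 with hs | hs
    · rw [hs, mul_zero]
    have hy1 : ∑ i, ((∑ i, y i)⁻¹ • y) i = 1 := by
      simp only [Pi.smul_apply, smul_eq_mul, ← Finset.mul_sum, inv_mul_cancel₀ hs]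
    have hscale : ∑ β ∈ multIdx n k, (d β - e β) * homBern k β y
        = (∑ i, y i) ^ k * ∑ β ∈ multIdx n k, (d β - e β) * homBern k β ((∑ i, y i)⁻¹ • y) := by
      rw [Finset.mul_sum]
      refine Finset.sum_congr rfl fun β hβ => ?_
      rw [mul_left_comm, ← homBern_smul hβ, smul_smul, mul_inv_cancel₀ hs, one_smul]
    rw [hscale, hvanish _ hy1, mul_zero, zero_mul]
  have hX : (∑ i, X i : MvPolynomial (Fin (n+1)) ℝ) ≠ 0 := fun h0 =>
    Nat.cast_add_one_ne_zero (R := ℝ) n (by simpa using congrArg (eval fun _ => (1 : ℝ)) h0)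
  have hP0 : P = 0 := (mul_eq_zero.1 hP_mul).resolve_right hX
  intro β hβ
  have hcoeff := congrArg (coeff (Finsupp.equivFunOnFinite.symm β)) hP0
  rw [coeff_zero, coeff_sum, Finset.sum_eq_single β (fun γ _ hγ => by
      rw [coeff_monomial, if_neg (Finsupp.equivFunOnFinite.symm.injective.ne hγ)])
    (fun h => absurd hβ h), coeff_monomial, if_pos rfl] at hcoeff
  have hfac : (k ! / ∏ i, ((β i)! : ℝ)) ≠ 0 := by positivity
  exact sub_eq_zero.1 ((mul_eq_zero.1 hcoeff).resolve_right hfac)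

lemma sum_prod_choose_eq_choose {l k : ℕ} (hlk : l ≤ k) {β : Fin (n+1) → ℕ}
    (hβ : β ∈ multIdx n k) :
    ∑ α ∈ multIdx n l, ∏ i, ((β i).choose (α i) : ℝ) = k.choose l := by
  -- the degree elevation of the constant `1` is `1`
  have h1 : elevate l k (fun _ => 1) β = 1 := by
    refine eq_of_sum_mul_bern_eq (d := elevate l k fun _ => 1) (e := fun _ => 1) (fun x => ?_) β hβ
    rw [← sum_mul_bern_eq_sum_elevate_mul_bern hlk]
    simp only [one_mul, sum_bern]
  have hC : (k.choose l : ℝ) ≠ 0 := by exact_mod_cast (Nat.choose_pos hlk).ne'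
  simpa only [elevate, one_mul, div_eq_one_iff_eq hC] using h1

lemma descFactorial_div_pow_mul_le_homBern {l k : ℕ} (hlk : l ≤ k) {α : Fin (n+1) → ℕ}
    (hα : α ∈ multIdx n l) (β : Fin (n+1) → ℕ) :
    (k.descFactorial l : ℝ) / k ^ l * ((∏ i, ((β i).choose (α i) : ℝ)) / k.choose l)
      ≤ homBern l α (fun i => β i / k) := by
  have hC : (k.choose l : ℝ) ≠ 0 := by exact_mod_cast (Nat.choose_pos hlk).ne'
  have hlhs : (k.descFactorial l : ℝ) / k ^ l * ((∏ i, ((β i).choose (α i) : ℝ)) / k.choose l)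
      = (l ! / ∏ i, ((α i)! : ℝ)) * ∏ i, ((β i).descFactorial (α i) / (k : ℝ) ^ α i) := by
    simp only [Nat.descFactorial_eq_factorial_mul_choose, Nat.cast_mul, Finset.prod_div_distrib,
      Finset.prod_mul_distrib, Finset.prod_pow_eq_pow_sum, mem_multIdx.1 hα]
    field_simp
  rw [hlhs, homBern]
  gcongr with i
  rw [div_pow]
  gcongr
  exact_mod_cast Nat.descFactorial_le_pow _ _

lemma elevate_pos {l k : ℕ} (hlk : l ≤ k) (hk : 0 < k) {b : (Fin (n+1) → ℕ) → ℝ} {L m : ℝ}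
    (hb : ∀ α ∈ multIdx n l, |b α| ≤ L)
    (hm : ∀ x ∈ stdSimp n, m ≤ ∑ α ∈ multIdx n l, b α * bern n l α x)
    (hLm : l * (l - 1) / 2 * L < k * m) {β : Fin (n+1) → ℕ} (hβ : β ∈ multIdx n k) :
    0 < elevate l k b β := by
  set t : Fin (n+1) → ℝ := fun i => β i / k
  have hkR : (0 : ℝ) < k := by exact_mod_cast hk
  have ht : ∑ i, t i = 1 := by
    rw [← Finset.sum_div, ← Nat.cast_sum, mem_multIdx.1 hβ, div_self hkR.ne']
  set r : ℝ := k.descFactorial l / k ^ l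
  set w : (Fin (n+1) → ℕ) → ℝ := fun α => r * ((∏ i, ((β i).choose (α i) : ℝ)) / k.choose l)
  have hr : 0 < r := by
    have := Nat.descFactorial_pos.2 hlk
    positivity
  have hL : 0 ≤ L := (abs_nonneg _).trans (hb _ (multIdx_nonempty n l).choose_spec)
  have hsum_w : ∑ α ∈ multIdx n l, w α = r := by
    have hC : (k.choose l : ℝ) ≠ 0 := by exact_mod_cast (Nat.choose_pos hlk).ne'
    rw [← Finset.mul_sum, ← Finset.sum_div, sum_prod_choose_eq_choose hlk hβ, div_self hC, mul_one]
  have hm_t : m ≤ ∑ α ∈ multIdx n l, b α * homBern l α t := by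
    have := hm (Fin.tail t) (tail_mem_stdSimp ⟨fun i => by positivity, ht⟩)
    simpa only [bern_eq_homBern, baryCoord_tail ht] using this
  have hdefect : ∑ α ∈ multIdx n l, b α * (homBern l α t - w α) ≤ L * (1 - r) := by
    rw [show 1 - r = ∑ α ∈ multIdx n l, (homBern l α t - w α) by
      rw [Finset.sum_sub_distrib, sum_homBern, ht, one_pow, hsum_w]]
    exact sum_mul_le_mul_sum_of_abs_le _ (fun α hα => sub_nonneg.2
      (descFactorial_div_pow_mul_le_homBern hlk hα β)) hb
  have hkey : 0 < r * elevate l k b β := calc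
    0 < m - L * (l * (l - 1) / (2 * k)) := by
      rw [sub_pos, show L * (l * (l - 1) / (2 * k)) = l * (l - 1) / 2 * L / k by ring,
        div_lt_iff₀ hkR]
      linarith
    _ ≤ m - L * (1 - r) := by gcongr; linarith [one_sub_le_descFactorial_div_pow hlk]
    _ ≤ ∑ α ∈ multIdx n l, b α * w α := by
      simp only [mul_sub, Finset.sum_sub_distrib] at hdefect
      linarith
    _ = r * elevate l k b β := by
      simp only [w, elevate, Finset.mul_sum, Finset.sum_div]
      exact Finset.sum_congr rfl fun α _ => by ring
  exact pos_of_mul_pos_right hkey hr.le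

end Bernstein

open Bernstein

theorem stmt16_general (n l k : ℕ)
    (p : MvPolynomial (Fin n) ℝ)
    (bl bk : (Fin (n+1) → ℕ) → ℝ)
    (hrepl : ∀ x, MvPolynomial.eval x p = ∑ α ∈ multIdx n l, bl α * bern n l α x)
    (hrepk : ∀ x, MvPolynomial.eval x p = ∑ α ∈ multIdx n k, bk α * bern n k α x)
    (hppos : ∀ x ∈ stdSimp n, 0 < MvPolynomial.eval x p)
    (pmin : ℝ) (hpmin : pmin = sInf ((fun x => MvPolynomial.eval x p) '' stdSimp n))
    (hk : (k : ℝ) > ((l : ℝ) * ((l : ℝ) - 1) / 2) *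
      ((multIdx n l).sup' (multIdx_nonempty n l) (fun α => |bl α|)) / pmin) :
    ∀ α ∈ multIdx n k, 0 < bk α := by
  intro β hβ
  set L := (multIdx n l).sup' (multIdx_nonempty n l) (fun α => |bl α|)
  have hbL : ∀ α ∈ multIdx n l, |bl α| ≤ L := fun α hα => Finset.le_sup' (fun α => |bl α|) hα
  have hcont := (MvPolynomial.continuous_eval p).continuousOn (s := stdSimp n)
  have h0 : (0 : Fin n → ℝ) ∈ stdSimp n := ⟨fun _ => le_rfl, by simp⟩
  have hpmin_pos : 0 < pmin :=
    hpmin ▸ isCompact_stdSimp.sInf_image_pos ⟨0, h0⟩ hcont hppos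
  have hpmin_le : ∀ x ∈ stdSimp n, pmin ≤ ∑ α ∈ multIdx n l, bl α * bern n l α x := fun x hx =>
    hrepl x ▸ hpmin ▸ csInf_le (isCompact_stdSimp.image_of_continuousOn hcont).bddBelow ⟨x, hx, rfl⟩
  have hpmin_L : pmin ≤ L := (hpmin_le 0 h0).trans (sum_mul_bern_le hbL h0)
  have hk' : l * (l - 1) / 2 * L < k * pmin := (div_lt_iff₀ hpmin_pos).1 hk
  obtain ⟨hk0, hlk⟩ := pos_and_le_of_mul_pred_div_two_mul_lt hpmin_pos hpmin_L hk'
  have hbk : bk β = elevate l k bl β := eq_of_sum_mul_bern_eq (fun x => by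
    rw [← hrepk, hrepl, sum_mul_bern_eq_sum_elevate_mul_bern hlk]) β hβ
  exact hbk ▸ elevate_pos hlk hk0 hbL hpmin_le hk' hβ

/-- Powers–Reznick degree bound for certificates of positivity. -/
theorem stmt16 (n l k : ℕ) (hn : 1 ≤ n) (hl : 2 ≤ l)
    (p : MvPolynomial (Fin n) ℝ) (hdeg : p.totalDegree = l)
    (bl bk : (Fin (n+1) → ℕ) → ℝ)
    (hrepl : ∀ x, MvPolynomial.eval x p = ∑ α ∈ multIdx n l, bl α * bern n l α x)
    (hrepk : ∀ x, MvPolynomial.eval x p = ∑ α ∈ multIdx n k, bk α * bern n k α x)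
    (hppos : ∀ x ∈ stdSimp n, 0 < MvPolynomial.eval x p)
    (pmin : ℝ) (hpmin : pmin = sInf ((fun x => MvPolynomial.eval x p) '' stdSimp n))
    (hk : (k : ℝ) > ((l : ℝ) * ((l : ℝ) - 1) / 2) *
      ((multIdx n l).sup' (multIdx_nonempty n l) (fun α => |bl α|)) / pmin) :
    ∀ α ∈ multIdx n k, 0 < bk α :=
  stmt16_general n l k p bl bk hrepl hrepk hppos pmin hpmin hk
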